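/- Assume (1−δ)·σₓ < √(2π)·σ² and 0 < η < 1. Then there exists a unique x₀* ∈ ℝ solving Φ((θ̄₀(x̄) − μ_p(x̄))/σ_p) = η/(1+η), where θ̄₀(x̄) is the unique root of θ − (1−δ)·Φ((x̄−θ)/σₓ) = 0, μ_p(x̄) = (σ²x̄ + σₓ²μ)/(σ²+σₓ²), and σ_p² = σ²σₓ²/(σ²+σₓ²). -/

import Mathlib

open Real Filter Set

/-- Standard normal probability density function. -/
noncomputable def stdPdf (t : ℝ) : ℝ := (Real.sqrt (2 * Real.pi))⁻¹ * Real.exp (-(t ^ 2) / 2)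

/-- Standard normal cumulative distribution function. -/
noncomputable def stdCdf (x : ℝ) : ℝ := ∫ t in Set.Iic x, stdPdf t
section Aux
open MeasureTheory

lemma sqrt2pi_pos : 0 < Real.sqrt (2 * Real.pi) := Real.sqrt_pos.2 (by positivity)

lemma stdPdf_pos (t : ℝ) : 0 < stdPdf t := by
  unfold stdPdf; positivity

lemma stdPdf_le (t : ℝ) : stdPdf t ≤ (Real.sqrt (2 * Real.pi))⁻¹ := by
  unfold stdPdf
  have h1 : Real.exp (-(t ^ 2) / 2) ≤ 1 := by
    rw [Real.exp_le_one_iff]; nlinarith [sq_nonneg t]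
  nlinarith [sqrt2pi_pos, inv_pos.2 sqrt2pi_pos, h1, Real.exp_pos (-(t^2)/2)]

lemma stdPdf_integrable : Integrable stdPdf := by
  have h := (integrable_exp_neg_mul_sq (b := (1:ℝ)/2) (by norm_num)).const_mul
    (Real.sqrt (2 * Real.pi))⁻¹
  convert h using 2 with t
  unfold stdPdf; ring_nf

lemma stdPdf_total : ∫ t, stdPdf t = 1 := by
  have h : ∫ t : ℝ, Real.exp (-(1/2 : ℝ) * t ^ 2) = Real.sqrt (π / (1/2)) :=
    integral_gaussian (1/2)
  have h2 : ∫ t, stdPdf t = (Real.sqrt (2 * Real.pi))⁻¹ * ∫ t : ℝ, Real.exp (-(1/2 : ℝ) * t ^ 2) := by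
    rw [← MeasureTheory.integral_const_mul]
    congr 1; funext t; unfold stdPdf; ring_nf
  rw [h2, h]
  have : π / (1/2 : ℝ) = 2 * π := by ring
  rw [this, inv_mul_cancel₀ (ne_of_gt sqrt2pi_pos)]

lemma stdCdf_sub (a b : ℝ) : stdCdf b - stdCdf a = ∫ t in a..b, stdPdf t :=
  intervalIntegral.integral_Iic_sub_Iic stdPdf_integrable.integrableOn
    stdPdf_integrable.integrableOn

lemma stdCdf_mono : Monotone stdCdf := by
  intro a b hab
  have h := stdCdf_sub a b
  have hpos : 0 ≤ ∫ t in a..b, stdPdf t :=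
    intervalIntegral.integral_nonneg hab (fun t _ => (stdPdf_pos t).le)
  linarith

lemma stdCdf_strictMono : StrictMono stdCdf := by
  intro a b hab
  have h := stdCdf_sub a b
  have : (0:ℝ) < ∫ t in a..b, stdPdf t :=
    intervalIntegral.intervalIntegral_pos_of_pos_on
      (stdPdf_integrable.intervalIntegrable)
      (fun t _ => stdPdf_pos t) hab
  linarith

lemma stdCdf_lipschitz {a b : ℝ} (h : a ≤ b) :
    stdCdf b - stdCdf a ≤ (Real.sqrt (2 * Real.pi))⁻¹ * (b - a) := by
  rw [stdCdf_sub]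
  have h1 := intervalIntegral.integral_mono_on h (stdPdf_integrable.intervalIntegrable)
    (intervalIntegrable_const (c := (Real.sqrt (2 * Real.pi))⁻¹)) (fun t _ => stdPdf_le t)
  have h2 : ∫ _ in a..b, (Real.sqrt (2 * Real.pi))⁻¹ = (b - a) * (Real.sqrt (2 * Real.pi))⁻¹ := by
    rw [intervalIntegral.integral_const, smul_eq_mul]
  rw [h2] at h1; linarith

lemma stdCdf_nonneg (x : ℝ) : 0 ≤ stdCdf x :=
  setIntegral_nonneg measurableSet_Iic (fun t _ => (stdPdf_pos t).le)

lemma stdCdf_le_one (x : ℝ) : stdCdf x ≤ 1 := by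
  have h := intervalIntegral.integral_Iic_add_Ioi (μ := volume) (f := stdPdf) (b := x)
    stdPdf_integrable.integrableOn stdPdf_integrable.integrableOn
  have hpos : 0 ≤ ∫ t in Ioi x, stdPdf t :=
    setIntegral_nonneg measurableSet_Ioi (fun t _ => (stdPdf_pos t).le)
  have := stdPdf_total
  unfold stdCdf; linarith

lemma stdCdf_tendsto_atTop : Tendsto stdCdf atTop (nhds 1) := by
  have h := (MeasureTheory.aecover_Iic (μ := volume) (l := atTop)
    (b := fun x : ℝ => x) tendsto_id).integral_tendsto_of_countably_generated
    stdPdf_integrable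
  rwa [stdPdf_total] at h

lemma stdCdf_tendsto_atBot : Tendsto stdCdf atBot (nhds 0) := by
  have h := (MeasureTheory.aecover_Ioi (μ := volume) (l := atBot)
    (a := fun x : ℝ => x) tendsto_id).integral_tendsto_of_countably_generated
    stdPdf_integrable
  rw [stdPdf_total] at h
  have heq : ∀ x : ℝ, stdCdf x = 1 - ∫ t in Ioi x, stdPdf t := by
    intro x
    have h2 := intervalIntegral.integral_Iic_add_Ioi (μ := volume) (f := stdPdf) (b := x)
      stdPdf_integrable.integrableOn stdPdf_integrable.integrableOn
    rw [stdPdf_total] at h2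
    unfold stdCdf; linarith
  have h3 : Tendsto (fun x => 1 - ∫ t in Ioi x, stdPdf t) atBot (nhds (1 - 1)) :=
    tendsto_const_nhds.sub h
  norm_num at h3
  exact h3.congr (fun x => (heq x).symm)

lemma stdCdf_continuous : Continuous stdCdf := by
  have hl : LipschitzWith ⟨(Real.sqrt (2 * Real.pi))⁻¹, by positivity⟩ stdCdf := by
    apply LipschitzWith.of_dist_le_mul
    intro x y
    rcases le_total x y with h | h
    · rw [Real.dist_eq, Real.dist_eq, abs_of_nonpos (by linarith [stdCdf_mono h]),
        abs_of_nonpos (by linarith)]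
      have := stdCdf_lipschitz h
      show _ ≤ (Real.sqrt (2 * Real.pi))⁻¹ * _
      push_cast; linarith
    · rw [Real.dist_eq, Real.dist_eq, abs_of_nonneg (by linarith [stdCdf_mono h]),
        abs_of_nonneg (by linarith)]
      have := stdCdf_lipschitz h
      show _ ≤ (Real.sqrt (2 * Real.pi))⁻¹ * _
      push_cast; linarith
  exact hl.continuous

end Aux

/-- Under Assumption 1 and 0 < η < 1, there is a unique equilibrium switching threshold
x₀* solving Φ((θ̄₀(x̄) − μ_p(x̄))/σ_p) = η/(1+η). -/
theorem stmt8 (δ σ σx μ η : ℝ) (hδ0 : 0 < δ) (hδ1 : δ < 1) (hσ : 0 < σ) (hσx : 0 < σx)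
    (hη0 : 0 < η) (hη1 : η < 1)
    (hA : (1 - δ) * σx < Real.sqrt (2 * Real.pi) * σ ^ 2)
    (θ0 : ℝ → ℝ)
    (hroot : ∀ xbar : ℝ, θ0 xbar - (1 - δ) * stdCdf ((xbar - θ0 xbar) / σx) = 0) :
    ∃! xstar : ℝ,
      stdCdf ((θ0 xstar - (σ ^ 2 * xstar + σx ^ 2 * μ) / (σ ^ 2 + σx ^ 2)) /
          Real.sqrt (σ ^ 2 * σx ^ 2 / (σ ^ 2 + σx ^ 2))) = η / (1 + η) := by
  have heq : ∀ x, θ0 x = (1 - δ) * stdCdf ((x - θ0 x) / σx) := fun x => by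
    have := hroot x; linarith
  have hδ' : (0:ℝ) < 1 - δ := by linarith
  set S : ℝ := σ ^ 2 + σx ^ 2 with hS
  have hSpos : 0 < S := by positivity
  set σp : ℝ := Real.sqrt (σ ^ 2 * σx ^ 2 / S) with hσp
  have hσppos : 0 < σp := Real.sqrt_pos.2 (by positivity)
  set C : ℝ := (Real.sqrt (2 * Real.pi))⁻¹ with hC
  have hCpos : 0 < C := by rw [hC]; exact inv_pos.2 sqrt2pi_pos
  set k : ℝ := (1 - δ) * C with hk
  have hk0 : 0 ≤ k := by positivity
  have hkσ : k * σx < σ ^ 2 := by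
    have hs := sqrt2pi_pos
    have h1 : C * Real.sqrt (2 * Real.pi) = 1 := inv_mul_cancel₀ (ne_of_gt hs)
    nlinarith [mul_lt_mul_of_pos_right hA hCpos]
  -- g := x - θ0 x is monotone
  have hgmono : ∀ x y, x ≤ y → x - θ0 x ≤ y - θ0 y := by
    intro x y hxy
    by_contra hcon
    push_neg at hcon
    have h1 : (y - θ0 y) / σx ≤ (x - θ0 x) / σx := by gcongr
    have h2 : θ0 y ≤ θ0 x := by
      rw [heq x, heq y]
      exact mul_le_mul_of_nonneg_left (stdCdf_mono h1) hδ'.le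
    linarith
  -- θ0 is monotone
  have hθmono : ∀ x y, x ≤ y → θ0 x ≤ θ0 y := by
    intro x y hxy
    rw [heq x, heq y]
    have h1 : (x - θ0 x) / σx ≤ (y - θ0 y) / σx := by
      have := hgmono x y hxy; gcongr
    exact mul_le_mul_of_nonneg_left (stdCdf_mono h1) hδ'.le
  -- key slope bound
  have hkey : ∀ x y, x < y → θ0 y - θ0 x < σ ^ 2 / S * (y - x) := by
    intro x y hxy
    have hD0 : 0 ≤ θ0 y - θ0 x := by have := hθmono x y hxy.le; linarith
    have hg : x - θ0 x ≤ y - θ0 y := hgmono x y hxy.le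
    have hlip : stdCdf ((y - θ0 y) / σx) - stdCdf ((x - θ0 x) / σx) ≤
        C * ((y - θ0 y) / σx - (x - θ0 x) / σx) :=
      stdCdf_lipschitz (by gcongr)
    have h1 : (θ0 y - θ0 x) * σx ≤ k * ((y - x) - (θ0 y - θ0 x)) := by
      have hd : θ0 y - θ0 x =
          (1 - δ) * (stdCdf ((y - θ0 y) / σx) - stdCdf ((x - θ0 x) / σx)) := by
        linear_combination heq y - heq x
      have h2 : (y - θ0 y) / σx - (x - θ0 x) / σx = ((y - x) - (θ0 y - θ0 x)) / σx := by
        field_simp; ring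
      rw [h2] at hlip
      have h3 : θ0 y - θ0 x ≤ (1 - δ) * (C * (((y - x) - (θ0 y - θ0 x)) / σx)) :=
        calc θ0 y - θ0 x
            = (1 - δ) * (stdCdf ((y - θ0 y) / σx) - stdCdf ((x - θ0 x) / σx)) := hd
          _ ≤ (1 - δ) * (C * (((y - x) - (θ0 y - θ0 x)) / σx)) :=
            mul_le_mul_of_nonneg_left hlip hδ'.le
      have h4 : (θ0 y - θ0 x) * σx ≤ (1 - δ) * (C * (((y - x) - (θ0 y - θ0 x)) / σx)) * σx :=
        mul_le_mul_of_nonneg_right h3 hσx.le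
      calc (θ0 y - θ0 x) * σx
          ≤ (1 - δ) * (C * (((y - x) - (θ0 y - θ0 x)) / σx)) * σx := h4
        _ = k * ((y - x) - (θ0 y - θ0 x)) := by rw [hk]; field_simp
    -- conclude
    have hΔ : 0 < y - x := by linarith
    have hgoal : (θ0 y - θ0 x) * (σ ^ 2 + σx ^ 2) < σ ^ 2 * (y - x) := by
      nlinarith [mul_pos (mul_pos hΔ hσx) (sub_pos.2 hkσ), mul_nonneg hk0 hD0,
        mul_nonneg (mul_nonneg hk0 hD0) hσx.le, sq_nonneg σx, sq_nonneg σ]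
    rw [div_mul_eq_mul_div, lt_div_iff₀ hSpos, hS]
    linarith
  have hratio : σ ^ 2 / S ≤ 1 := by
    rw [div_le_one hSpos, hS]; nlinarith [sq_nonneg σx]
  -- θ0 is continuous (Lipschitz with constant 1)
  have hθcont : Continuous θ0 := by
    have hl : LipschitzWith 1 θ0 := by
      apply LipschitzWith.of_dist_le_mul
      intro x y
      rcases lt_trichotomy x y with hc | hc | hc
      · have h1 := hkey x y hc
        have h2 := hθmono x y hc.le
        have h3 : σ ^ 2 / S * (y - x) ≤ y - x := by nlinarith
        rw [Real.dist_eq, Real.dist_eq, abs_of_nonpos (by linarith), abs_of_nonpos (by linarith)]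
        push_cast; linarith
      · simp [hc]
      · have h1 := hkey y x hc
        have h2 := hθmono y x hc.le
        have h3 : σ ^ 2 / S * (x - y) ≤ x - y := by nlinarith
        rw [Real.dist_eq, Real.dist_eq, abs_of_nonneg (by linarith), abs_of_nonneg (by linarith)]
        push_cast; linarith
    exact hl.continuous
  have hθbd : ∀ x, 0 ≤ θ0 x ∧ θ0 x ≤ 1 - δ := by
    intro x
    rw [heq x]
    refine ⟨mul_nonneg hδ'.le (stdCdf_nonneg _), ?_⟩
    nlinarith [stdCdf_le_one ((x - θ0 x) / σx), stdCdf_nonneg ((x - θ0 x) / σx)]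
  -- the inner function
  set h : ℝ → ℝ := fun x => (θ0 x - (σ ^ 2 * x + σx ^ 2 * μ) / S) / σp with hh
  have hanti : StrictAnti h := by
    intro x y hxy
    rw [hh]
    simp only
    have h1 := hkey x y hxy
    have h2 : (σ ^ 2 * y + σx ^ 2 * μ) / S - (σ ^ 2 * x + σx ^ 2 * μ) / S
        = σ ^ 2 / S * (y - x) := by field_simp; ring
    have h3 : θ0 y - (σ ^ 2 * y + σx ^ 2 * μ) / S < θ0 x - (σ ^ 2 * x + σx ^ 2 * μ) / S := by
      linarith
    exact (div_lt_div_iff_of_pos_right hσppos).2 h3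
  have hcont : Continuous h := by
    apply Continuous.div_const
    exact hθcont.sub ((continuous_const.mul continuous_id |>.add continuous_const).div_const S)
  -- limits of h
  have hinner_top : Tendsto (fun x : ℝ => (σ ^ 2 * x + σx ^ 2 * μ) / S) atTop atTop := by
    apply Tendsto.atTop_div_const hSpos
    exact tendsto_atTop_add_const_right _ _ (Tendsto.const_mul_atTop (by positivity) tendsto_id)
  have hinner_bot : Tendsto (fun x : ℝ => (σ ^ 2 * x + σx ^ 2 * μ) / S) atBot atBot := by
    apply Tendsto.atBot_div_const hSpos
    exact tendsto_atBot_add_const_right _ _ (Tendsto.const_mul_atBot (by positivity) tendsto_id)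
  have htop : Tendsto h atTop atBot := by
    refine tendsto_atBot_mono
      (?_ : ∀ x, h x ≤ (fun x => ((1 - δ) - (σ ^ 2 * x + σx ^ 2 * μ) / S) / σp) x) ?_
    · intro x
      simp only [hh]
      exact (div_le_div_iff_of_pos_right hσppos).2 (by linarith [(hθbd x).2])
    · apply Tendsto.atBot_div_const hσppos
      have := tendsto_atBot_add_const_left atTop (1 - δ)
        (tendsto_neg_atTop_atBot.comp hinner_top)
      simpa [sub_eq_add_neg, Function.comp] using this
  have hbot : Tendsto h atBot atTop := by
    refine tendsto_atTop_mono
      (?_ : ∀ x, (fun x => (0 - (σ ^ 2 * x + σx ^ 2 * μ) / S) / σp) x ≤ h x) ?_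
    · intro x
      simp only [hh]
      exact (div_le_div_iff_of_pos_right hσppos).2 (by linarith [(hθbd x).1])
    · apply Tendsto.atTop_div_const hσppos
      have := tendsto_atTop_add_const_left atBot (0 : ℝ)
        (tendsto_neg_atBot_atTop.comp hinner_bot)
      simpa [sub_eq_add_neg, Function.comp] using this
  -- the target value
  have hc0 : 0 < η / (1 + η) := div_pos hη0 (by linarith)
  have hc1 : η / (1 + η) < 1 := (div_lt_one (by linarith)).2 (by linarith)
  have hF : Tendsto (fun x => stdCdf (h x)) atTop (nhds 0) := stdCdf_tendsto_atBot.comp htop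
  have hF' : Tendsto (fun x => stdCdf (h x)) atBot (nhds 1) := stdCdf_tendsto_atTop.comp hbot
  obtain ⟨x₁, hx₁⟩ := (hF.eventually_lt_const hc0).exists
  obtain ⟨x₂, hx₂⟩ := (hF'.eventually_const_lt hc1).exists
  have hFanti : StrictAnti (fun x => stdCdf (h x)) := fun a b hab => stdCdf_strictMono (hanti hab)
  have hx21 : x₂ < x₁ := by
    by_contra hcon
    push_neg at hcon
    have := hFanti.antitone hcon
    linarith
  have hcont2 : ContinuousOn (fun x => stdCdf (h x)) (Icc x₂ x₁) :=
    (stdCdf_continuous.comp hcont).continuousOn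
  have hmem : η / (1 + η) ∈ Icc (stdCdf (h x₁)) (stdCdf (h x₂)) := ⟨hx₁.le, hx₂.le⟩
  obtain ⟨x, _, hx⟩ := intermediate_value_Icc' hx21.le hcont2 hmem
  exact ⟨x, hx, fun y hy => hFanti.injective (hy.trans hx.symm)⟩
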